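/- Under the stated setup, let (λ^{(k)}) be a sequence generated by iterative maximization, λ^{(k+1)} = M(λ^{(k)}) = γ̂^{(k)} + λ^{(k)} where γ̂^{(k)} globally maximizes γ ↦ A(γ, λ^{(k)}), and assume the sequence of likelihood values (L(λ^{(k)})) is bounded above, that (λ^{(k)}) has a subsequence converging to some λ* with Z_{λ*} finite, that A and L are continuous, and that all directional derivatives of A(·, λ) at 0 and of L at λ exist and agree for each λ. Then (L(λ^{(k)})) is nondecreasing and converges to L* = L(λ*), where λ* is a critical point of L (all directional derivatives of L at λ* vanish). -/

import Mathlib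

/- Common setup: log-linear models over proof trees (complete data X) and
   queries (incomplete data Y). -/

variable {X Y : Type*}

/-- `ν_#(x) = ∑ i, ν_i(x)`. -/
def nuSharp {n : ℕ} (ν : Fin n → X → ℕ) (x : X) : ℕ := ∑ i, ν i x

/-- weighted property sum `λ·ν(x)`. -/
noncomputable def wdot {n : ℕ} (l : Fin n → ℝ) (ν : Fin n → X → ℕ) (x : X) : ℝ :=
  ∑ i, l i * (ν i x : ℝ)

/-- normalizing constant `Z_λ`. -/
noncomputable def Zpart (p0 : X → ℝ) {n : ℕ} (ν : Fin n → X → ℕ) (l : Fin n → ℝ) : ℝ :=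
  ∑' x : X, Real.exp (wdot l ν x) * p0 x

/-- log-linear distribution `p_λ(x)`. -/
noncomputable def pLL (p0 : X → ℝ) {n : ℕ} (ν : Fin n → X → ℕ) (l : Fin n → ℝ) (x : X) : ℝ :=
  (Zpart p0 ν l)⁻¹ * Real.exp (wdot l ν x) * p0 x

/-- incomplete-data probability `p_λ(y) = ∑_{x ∈ X(y)} p_λ(x)`. -/
noncomputable def pLLY (Yf : X → Y) (p0 : X → ℝ) {n : ℕ} (ν : Fin n → X → ℕ)
    (l : Fin n → ℝ) (y : Y) : ℝ :=
  ∑' x : {x : X // Yf x = y}, pLL p0 ν l x.1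

/-- incomplete-data log-likelihood `L(λ) = ∑_{y ∈ 𝒴} ln p_λ(y)`. -/
noncomputable def LL (Yf : X → Y) (p0 : X → ℝ) {n : ℕ} (ν : Fin n → X → ℕ)
    (𝒴 : Multiset Y) (l : Fin n → ℝ) : ℝ :=
  (𝒴.map fun y => Real.log (pLLY Yf p0 ν l y)).sum

/-- expectation `p_λ[f]`. -/
noncomputable def pExp (p0 : X → ℝ) {n : ℕ} (ν : Fin n → X → ℕ) (l : Fin n → ℝ)
    (f : X → ℝ) : ℝ :=
  ∑' x : X, pLL p0 ν l x * f x

/-- conditional expectation `k_λ[f]` given observed `y`. -/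
noncomputable def kExp (Yf : X → Y) (p0 : X → ℝ) {n : ℕ} (ν : Fin n → X → ℕ)
    (l : Fin n → ℝ) (y : Y) (f : X → ℝ) : ℝ :=
  ∑' x : {x : X // Yf x = y}, (pLL p0 ν l x.1 / pLLY Yf p0 ν l y) * f x.1

/-- auxiliary function
`A(γ,λ) = ∑_{y∈𝒴} (1 + k_λ[γ·ν] − p_λ[∑ i, ν̄_i e^{γ_i ν_#}])`. -/
noncomputable def Aaux (Yf : X → Y) (p0 : X → ℝ) {n : ℕ} (ν : Fin n → X → ℕ)
    (𝒴 : Multiset Y) (γ l : Fin n → ℝ) : ℝ :=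
  (𝒴.map fun y =>
    1 + kExp Yf p0 ν l y (fun x => wdot γ ν x)
      - pExp p0 ν l (fun x =>
          ∑ i, ((ν i x : ℝ) / (nuSharp ν x : ℝ)) * Real.exp (γ i * (nuSharp ν x : ℝ)))).sum

/-! The iteration is a minorize–maximize scheme. Jensen's inequality for `exp`, under the
conditional distribution `k_λ` on `X(y)` and under the weights `ν̄_i(x)`, together with
`ln z ≤ z - 1` for the ratio `Z_{γ+λ} / Z_λ`, gives `A(γ, λ) ≤ L(γ + λ) - L(λ)`, and `A(0, λ) = 0`.
So each step raises `L` by at least `max_γ A(γ, λ⁽ᵏ⁾) ≥ 0`. Along the convergent subsequence these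
increments tend to `0`, hence by continuity `A(·, λ*) ≤ 0 = A(0, λ*)`: `t = 0` maximizes
`t ↦ A(t • γ, λ*)`, whose derivative at `0` is the directional derivative of `L` at `λ*`. -/

open Filter Topology

section MinorizeMaximize

variable {E : Type*} [AddCommGroup E] [Module ℝ E] [TopologicalSpace E]

lemma nonpos_of_le_increment {u a : ℕ → ℝ} {c a₀ : ℝ} {φ : ℕ → ℕ}
    (hu : Tendsto u atTop (𝓝 c)) (hφ : Tendsto φ atTop atTop) (ha : Tendsto a atTop (𝓝 a₀))
    (hle : ∀ j, a j ≤ u (φ j + 1) - u (φ j)) : a₀ ≤ 0 := by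
  have hincr : Tendsto (fun j => u (φ j + 1) - u (φ j)) atTop (𝓝 0) := by
    simpa using (hu.comp ((tendsto_add_atTop_nat 1).comp hφ)).sub (hu.comp hφ)
  exact le_of_tendsto_of_tendsto' ha hincr hle

theorem minorize_maximize_tendsto_critical (A : E → E → ℝ) (L : E → ℝ) {S : Set E}
    {seq : ℕ → E} (hseq : ∀ k, seq k ∈ S) (hA0 : ∀ l ∈ S, A 0 l = 0)
    (hgain : ∀ k γ, A γ (seq k) ≤ L (seq (k + 1)) - L (seq k))
    {lstar : E} (hlstar : lstar ∈ S) {φ : ℕ → ℕ} (hφ : StrictMono φ)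
    (hlim : Tendsto (seq ∘ φ) atTop (𝓝 lstar))
    (hAcont : ∀ γ, ContinuousWithinAt (A γ) S lstar) (hLcont : ContinuousWithinAt L S lstar)
    (hderiv : ∀ γ, ∃ D, HasDerivAt (fun t : ℝ => A (t • γ) lstar) D 0 ∧
      HasDerivAt (fun t : ℝ => L (lstar + t • γ)) D 0) :
    Monotone (L ∘ seq) ∧ Tendsto (L ∘ seq) atTop (𝓝 (L lstar)) ∧
      ∀ γ, HasDerivAt (fun t : ℝ => L (lstar + t • γ)) 0 0 := by
  have hmono : Monotone (L ∘ seq) := monotone_nat_of_le_succ fun k => by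
    simpa [hA0 _ (hseq k)] using hgain k 0
  have hlimS : Tendsto (seq ∘ φ) atTop (𝓝[S] lstar) :=
    tendsto_nhdsWithin_iff.2 ⟨hlim, .of_forall fun j => hseq (φ j)⟩
  have hL : Tendsto (L ∘ seq) atTop (𝓝 (L lstar)) :=
    (tendsto_iff_tendsto_subseq_of_monotone hmono hφ.tendsto_atTop).2
      (hLcont.tendsto.comp hlimS)
  have hA_nonpos : ∀ γ, A γ lstar ≤ 0 := fun γ =>
    nonpos_of_le_increment hL hφ.tendsto_atTop ((hAcont γ).tendsto.comp hlimS)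
      fun j => hgain (φ j) γ
  refine ⟨hmono, hL, fun γ => ?_⟩
  obtain ⟨D, hDA, hDL⟩ := hderiv γ
  have hmax : IsLocalMax (fun t : ℝ => A (t • γ) lstar) 0 :=
    .of_forall fun t => by simpa [hA0 _ hlstar] using hA_nonpos (t • γ)
  rwa [hmax.hasDerivAt_eq_zero hDA] at hDL

end MinorizeMaximize

theorem tsum_mul_le_log_tsum_mul_exp {ι : Type*} {q w : ι → ℝ} (hq0 : ∀ i, 0 ≤ q i)
    (hq : HasSum q 1) (hqw : Summable fun i => q i * w i)
    (hqe : Summable fun i => q i * Real.exp (w i)) :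
    ∑' i, q i * w i ≤ Real.log (∑' i, q i * Real.exp (w i)) := by
  set a := ∑' i, q i * w i
  -- tangent line of `exp` at `a`
  have htangent : ∀ i, Real.exp a * (q i * w i + (1 - a) * q i) ≤ q i * Real.exp (w i) := by
    intro i
    have h := mul_le_mul_of_nonneg_left (Real.add_one_le_exp (w i - a)) (Real.exp_pos a).le
    rw [← Real.exp_add, add_sub_cancel] at h
    nlinarith [hq0 i]
  have hsum := Summable.tsum_le_tsum htangent
    ((hqw.add (hq.summable.mul_left (1 - a))).mul_left _) hqe
  rw [tsum_mul_left, Summable.tsum_add hqw (hq.summable.mul_left _), tsum_mul_left,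
    hq.tsum_eq] at hsum
  rw [Real.le_log_iff_exp_le (lt_of_lt_of_le (Real.exp_pos a) (by linarith))]
  linarith

section LogLinear

variable {n : ℕ} (ν : Fin n → X → ℕ)

/-- The integrand `∑ i, ν̄_i e^{γ_i ν_#}` of the expectation `p_λ[·]` in `A(γ, λ)`. -/
noncomputable def nuBarExpSum (γ : Fin n → ℝ) (x : X) : ℝ :=
  ∑ i, ((ν i x : ℝ) / (nuSharp ν x : ℝ)) * Real.exp (γ i * (nuSharp ν x : ℝ))

lemma sum_div_nuSharp_eq_one {x : X} (hx : 1 ≤ nuSharp ν x) :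
    ∑ i, (ν i x : ℝ) / (nuSharp ν x : ℝ) = 1 := by
  have hpos : (0 : ℝ) < nuSharp ν x := by exact_mod_cast hx
  rw [← Finset.sum_div, div_eq_one_iff_eq hpos.ne']
  simp [nuSharp]

lemma nuBarExpSum_zero {x : X} (hx : 1 ≤ nuSharp ν x) : nuBarExpSum ν 0 x = 1 := by
  simpa [nuBarExpSum] using sum_div_nuSharp_eq_one ν hx

lemma exp_wdot_le_nuBarExpSum {x : X} (hx : 1 ≤ nuSharp ν x) (γ : Fin n → ℝ) :
    Real.exp (wdot γ ν x) ≤ nuBarExpSum ν γ x := by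
  have hpos : (0 : ℝ) < nuSharp ν x := by exact_mod_cast hx
  have hmean : ∑ i, (ν i x : ℝ) / nuSharp ν x * (γ i * nuSharp ν x) = wdot γ ν x :=
    Finset.sum_congr rfl fun i _ => by field_simp
  have h := convexOn_exp.map_sum_le (t := Finset.univ) (fun i _ => by positivity)
    (sum_div_nuSharp_eq_one ν hx) (fun i _ => Set.mem_univ (γ i * nuSharp ν x))
  simp only [smul_eq_mul] at h
  rwa [hmean] at h

lemma wdot_add (γ l : Fin n → ℝ) (x : X) : wdot (γ + l) ν x = wdot γ ν x + wdot l ν x := by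
  simp [wdot, add_mul, Finset.sum_add_distrib]

variable (p0 : X → ℝ)

lemma Zpart_nonneg (hp0 : ∀ x, 0 ≤ p0 x) (l : Fin n → ℝ) : 0 ≤ Zpart p0 ν l :=
  tsum_nonneg fun x => mul_nonneg (Real.exp_pos _).le (hp0 x)

lemma pLL_nonneg (hp0 : ∀ x, 0 ≤ p0 x) (l : Fin n → ℝ) (x : X) : 0 ≤ pLL p0 ν l x :=
  mul_nonneg (mul_nonneg (inv_nonneg.2 (Zpart_nonneg ν p0 hp0 l)) (Real.exp_pos _).le) (hp0 x)

lemma pLL_eq (l : Fin n → ℝ) (x : X) :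
    pLL p0 ν l x = (Zpart p0 ν l)⁻¹ * (Real.exp (wdot l ν x) * p0 x) :=
  mul_assoc _ _ _

lemma summable_pLL {l : Fin n → ℝ} (hl : Summable fun x => Real.exp (wdot l ν x) * p0 x) :
    Summable (pLL p0 ν l) :=
  (hl.mul_left _).congr fun x => (pLL_eq ν p0 l x).symm

lemma tsum_pLL {l : Fin n → ℝ} (hZ : Zpart p0 ν l ≠ 0) : ∑' x, pLL p0 ν l x = 1 := by
  simp only [pLL_eq, tsum_mul_left]
  exact inv_mul_cancel₀ hZ

lemma pLL_mul_exp_wdot {l γ : Fin n → ℝ} (hZ : Zpart p0 ν (γ + l) ≠ 0) (x : X) :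
    pLL p0 ν l x * Real.exp (wdot γ ν x) =
      Zpart p0 ν (γ + l) / Zpart p0 ν l * pLL p0 ν (γ + l) x := by
  rw [pLL_eq, pLL_eq, wdot_add, Real.exp_add]
  field_simp

lemma tsum_pLL_mul_exp_wdot {l γ : Fin n → ℝ} (hZ : Zpart p0 ν (γ + l) ≠ 0) :
    ∑' x, pLL p0 ν l x * Real.exp (wdot γ ν x) = Zpart p0 ν (γ + l) / Zpart p0 ν l := by
  simp only [pLL_mul_exp_wdot ν p0 hZ, tsum_mul_left, tsum_pLL ν p0 hZ, mul_one]

lemma log_Zpart_add_sub_le (hp0 : ∀ x, 0 ≤ p0 x) (hν : ∀ x, 1 ≤ nuSharp ν x)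
    {l γ : Fin n → ℝ} (hZ : 0 < Zpart p0 ν l) (hZ' : 0 < Zpart p0 ν (γ + l))
    (hsum : Summable fun x => Real.exp (wdot (γ + l) ν x) * p0 x)
    (hps : Summable fun x => pLL p0 ν l x * nuBarExpSum ν γ x) :
    Real.log (Zpart p0 ν (γ + l)) - Real.log (Zpart p0 ν l) ≤
      pExp p0 ν l (nuBarExpSum ν γ) - 1 := by
  have htilt : ∑' x, pLL p0 ν l x * Real.exp (wdot γ ν x) ≤ pExp p0 ν l (nuBarExpSum ν γ) :=
    Summable.tsum_le_tsum
      (fun x => mul_le_mul_of_nonneg_left (exp_wdot_le_nuBarExpSum ν (hν x) γ)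
        (pLL_nonneg ν p0 hp0 l x))
      (by simpa only [pLL_mul_exp_wdot ν p0 hZ'.ne'] using
        (summable_pLL ν p0 hsum).mul_left (Zpart p0 ν (γ + l) / Zpart p0 ν l))
      hps
  rw [tsum_pLL_mul_exp_wdot ν p0 hZ'.ne'] at htilt
  rw [← Real.log_div hZ'.ne' hZ.ne']
  linarith [Real.log_le_sub_one_of_pos (div_pos hZ' hZ)]

lemma pLLY_eq (Yf : X → Y) (l : Fin n → ℝ) (y : Y) :
    pLLY Yf p0 ν l y =
      (Zpart p0 ν l)⁻¹ * ∑' x : {x : X // Yf x = y}, Real.exp (wdot l ν x) * p0 x := by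
  rw [pLLY, ← tsum_mul_left]
  exact tsum_congr fun x => pLL_eq ν p0 l x

lemma Zpart_pos_of_pLLY_pos (hp0 : ∀ x, 0 ≤ p0 x) {Yf : X → Y} {l : Fin n → ℝ} {y : Y}
    (hy : 0 < pLLY Yf p0 ν l y) : 0 < Zpart p0 ν l := by
  refine (Zpart_nonneg ν p0 hp0 l).lt_of_ne fun h => ?_
  rw [pLLY_eq, ← h, inv_zero, zero_mul] at hy
  exact hy.false

variable (Yf : X → Y)

lemma hasSum_pLL_div_pLLY {l : Fin n → ℝ} {y : Y} (hy : 0 < pLLY Yf p0 ν l y) :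
    HasSum (fun x : {x : X // Yf x = y} => pLL p0 ν l x.1 / pLLY Yf p0 ν l y) 1 := by
  have hsum : Summable fun x : {x : X // Yf x = y} => pLL p0 ν l x.1 := by
    by_contra h
    rw [pLLY, tsum_eq_zero_of_not_summable h] at hy
    exact hy.false
  have h := hsum.hasSum.div_const (pLLY Yf p0 ν l y)
  rwa [← pLLY, div_self hy.ne'] at h

lemma one_add_kExp_sub_pExp_add_log_le (hp0 : ∀ x, 0 ≤ p0 x) (hν : ∀ x, 1 ≤ nuSharp ν x)
    {l γ : Fin n → ℝ} {y : Y} (hsum : Summable fun x => Real.exp (wdot (γ + l) ν x) * p0 x)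
    (hy : 0 < pLLY Yf p0 ν l y) (hy' : 0 < pLLY Yf p0 ν (γ + l) y)
    (hk : Summable fun x : {x : X // Yf x = y} =>
      (pLL p0 ν l x.1 / pLLY Yf p0 ν l y) * wdot γ ν x.1)
    (hps : Summable fun x => pLL p0 ν l x * nuBarExpSum ν γ x) :
    1 + kExp Yf p0 ν l y (fun x => wdot γ ν x) - pExp p0 ν l (nuBarExpSum ν γ)
      + Real.log (pLLY Yf p0 ν l y) ≤ Real.log (pLLY Yf p0 ν (γ + l) y) := by
  have hZ := Zpart_pos_of_pLLY_pos ν p0 hp0 hy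
  have hZ' := Zpart_pos_of_pLLY_pos ν p0 hp0 hy'
  have htilt : ∀ x : {x : X // Yf x = y},
      pLL p0 ν l x.1 / pLLY Yf p0 ν l y * Real.exp (wdot γ ν x.1) =
        Zpart p0 ν (γ + l) / Zpart p0 ν l / pLLY Yf p0 ν l y * pLL p0 ν (γ + l) x.1 := by
    intro x
    rw [div_mul_eq_mul_div, pLL_mul_exp_wdot ν p0 hZ'.ne']
    ring
  have hjensen := tsum_mul_le_log_tsum_mul_exp
    (q := fun x : {x : X // Yf x = y} => pLL p0 ν l x.1 / pLLY Yf p0 ν l y)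
    (w := fun x => wdot γ ν x.1) (fun x => div_nonneg (pLL_nonneg ν p0 hp0 l x.1) hy.le)
    (hasSum_pLL_div_pLLY ν p0 Yf hy) hk
    (((summable_pLL ν p0 hsum).subtype _).mul_left _ |>.congr fun x => (htilt x).symm)
  rw [tsum_congr htilt, tsum_mul_left, ← pLLY, Real.log_mul (by positivity) hy'.ne',
    Real.log_div (by positivity) hy.ne', Real.log_div hZ'.ne' hZ.ne'] at hjensen
  have hZratio := log_Zpart_add_sub_le ν p0 hp0 hν hZ hZ' hsum hps
  rw [kExp]
  linarith

lemma Aaux_zero (hp0 : ∀ x, 0 ≤ p0 x) (hν : ∀ x, 1 ≤ nuSharp ν x) {𝒴 : Multiset Y}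
    {l : Fin n → ℝ} (hpos : ∀ y ∈ 𝒴, 0 < pLLY Yf p0 ν l y) : Aaux Yf p0 ν 𝒴 0 l = 0 := by
  refine Multiset.sum_eq_zero fun z hz => ?_
  obtain ⟨y, hy, rfl⟩ := Multiset.mem_map.1 hz
  have hZ := Zpart_pos_of_pLLY_pos ν p0 hp0 (hpos y hy)
  have hmass : pExp p0 ν l (nuBarExpSum ν 0) = 1 := by
    simp only [pExp, nuBarExpSum_zero ν (hν _), mul_one]
    exact tsum_pLL ν p0 hZ.ne'
  change 1 + kExp Yf p0 ν l y (fun x => wdot 0 ν x) - pExp p0 ν l (nuBarExpSum ν 0) = 0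
  simp [hmass, kExp, wdot]

theorem Aaux_add_LL_le_LL_add (hp0 : ∀ x, 0 ≤ p0 x) (hν : ∀ x, 1 ≤ nuSharp ν x)
    {𝒴 : Multiset Y} {l γ : Fin n → ℝ}
    (hsum : Summable fun x => Real.exp (wdot (γ + l) ν x) * p0 x)
    (hpos : ∀ y ∈ 𝒴, 0 < pLLY Yf p0 ν l y) (hpos' : ∀ y ∈ 𝒴, 0 < pLLY Yf p0 ν (γ + l) y)
    (hk : ∀ y ∈ 𝒴, Summable fun x : {x : X // Yf x = y} =>
      (pLL p0 ν l x.1 / pLLY Yf p0 ν l y) * wdot γ ν x.1)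
    (hps : Summable fun x => pLL p0 ν l x * nuBarExpSum ν γ x) :
    Aaux Yf p0 ν 𝒴 γ l + LL Yf p0 ν 𝒴 l ≤ LL Yf p0 ν 𝒴 (γ + l) := by
  rw [Aaux, LL, LL, ← Multiset.sum_map_add]
  exact Multiset.sum_map_le_sum_map _ _ fun y hy =>
    one_add_kExp_sub_pExp_add_log_le ν p0 Yf hp0 hν hsum (hpos y hy) (hpos' y hy) (hk y hy) hps

end LogLinear

theorem im_likelihood_converges_to_critical_value_general
    {X Y : Type*} (Yf : X → Y)
    (p0 : X → ℝ) (hp0 : ∀ x, 0 < p0 x)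
    {n : ℕ} (ν : Fin n → X → ℕ) (hν : ∀ x, 1 ≤ nuSharp ν x)
    (𝒴 : Multiset Y)
    (hpos : ∀ l : Fin n → ℝ, (Summable fun x : X => Real.exp (wdot l ν x) * p0 x) →
      ∀ y ∈ 𝒴, 0 < pLLY Yf p0 ν l y)
    (hksum : ∀ l γ : Fin n → ℝ, ∀ y ∈ 𝒴, Summable fun x : {x : X // Yf x = y} =>
      (pLL p0 ν l x.1 / pLLY Yf p0 ν l y) * wdot γ ν x.1)
    (hpsum : ∀ l γ : Fin n → ℝ, Summable fun x : X => pLL p0 ν l x *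
      ∑ i, ((ν i x : ℝ) / (nuSharp ν x : ℝ)) * Real.exp (γ i * (nuSharp ν x : ℝ)))
    (seq γh : ℕ → Fin n → ℝ)
    (hseqZ : ∀ k : ℕ, Summable fun x : X => Real.exp (wdot (seq k) ν x) * p0 x)
    (hstep : ∀ k : ℕ, seq (k + 1) = γh k + seq k)
    (hmax : ∀ k : ℕ, ∀ γ : Fin n → ℝ,
      Aaux Yf p0 ν 𝒴 γ (seq k) ≤ Aaux Yf p0 ν 𝒴 (γh k) (seq k))
    (lstar : Fin n → ℝ)
    (hZstar : Summable fun x : X => Real.exp (wdot lstar ν x) * p0 x)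
    (φ : ℕ → ℕ) (hφ : StrictMono φ)
    (hlim : Filter.Tendsto (fun k : ℕ => seq (φ k)) Filter.atTop (nhds lstar))
    (hAcont : ContinuousOn
      (fun p : (Fin n → ℝ) × (Fin n → ℝ) => Aaux Yf p0 ν 𝒴 p.1 p.2)
      (Set.univ ×ˢ {l : Fin n → ℝ | Summable fun x : X => Real.exp (wdot l ν x) * p0 x}))
    (hLcont : ContinuousOn (LL Yf p0 ν 𝒴)
      {l : Fin n → ℝ | Summable fun x : X => Real.exp (wdot l ν x) * p0 x})
    (hderiv : ∀ l : Fin n → ℝ, (Summable fun x : X => Real.exp (wdot l ν x) * p0 x) →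
      ∀ γ : Fin n → ℝ, ∃ D : ℝ,
        HasDerivAt (fun t : ℝ => Aaux Yf p0 ν 𝒴 (t • γ) l) D 0 ∧
        HasDerivAt (fun t : ℝ => LL Yf p0 ν 𝒴 (l + t • γ)) D 0) :
    Monotone (fun k : ℕ => LL Yf p0 ν 𝒴 (seq k)) ∧
    Filter.Tendsto (fun k : ℕ => LL Yf p0 ν 𝒴 (seq k)) Filter.atTop
      (nhds (LL Yf p0 ν 𝒴 lstar)) ∧
    (∀ γ : Fin n → ℝ, HasDerivAt (fun t : ℝ => LL Yf p0 ν 𝒴 (lstar + t • γ)) 0 0) := by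
  have hp0' : ∀ x, 0 ≤ p0 x := fun x => (hp0 x).le
  have hgain : ∀ k γ,
      Aaux Yf p0 ν 𝒴 γ (seq k) ≤ LL Yf p0 ν 𝒴 (seq (k + 1)) - LL Yf p0 ν 𝒴 (seq k) := by
    intro k γ
    have hminor := Aaux_add_LL_le_LL_add ν p0 Yf hp0' hν (hstep k ▸ hseqZ (k + 1))
      (hpos _ (hseqZ k)) (hstep k ▸ hpos _ (hseqZ (k + 1))) (hksum (seq k) (γh k))
      (hpsum (seq k) (γh k))
    rw [← hstep k] at hminor
    linarith [hmax k γ]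
  have hAcont' : ∀ γ, ContinuousWithinAt (fun l => Aaux Yf p0 ν 𝒴 γ l)
      {l | Summable fun x : X => Real.exp (wdot l ν x) * p0 x} lstar := fun γ =>
    hAcont.comp (continuousOn_const.prodMk continuousOn_id) (fun _ hl => ⟨trivial, hl⟩) _ hZstar
  exact minorize_maximize_tendsto_critical (Aaux Yf p0 ν 𝒴) (LL Yf p0 ν 𝒴) hseqZ
    (fun l hl => Aaux_zero ν p0 Yf hp0' hν (hpos l hl)) hgain hZstar hφ hlim hAcont'
    (hLcont lstar hZstar) (hderiv lstar hZstar)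

/-- Corollary 7: a bounded-above sequence of IM likelihood values is
nondecreasing and converges to `L(λ*)` for a critical point `λ*` of `L`. -/
theorem im_likelihood_converges_to_critical_value
    {X Y : Type*} [Countable X] (Yf : X → Y)
    (p0 : X → ℝ) (hp0 : ∀ x, 0 < p0 x) (hp0sum : ∑' x : X, p0 x = 1)
    {n : ℕ} (ν : Fin n → X → ℕ) (hν : ∀ x, 1 ≤ nuSharp ν x)
    (𝒴 : Multiset Y)
    (hpos : ∀ l : Fin n → ℝ, (Summable fun x : X => Real.exp (wdot l ν x) * p0 x) →
      ∀ y ∈ 𝒴, 0 < pLLY Yf p0 ν l y)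
    (hksum : ∀ l γ : Fin n → ℝ, ∀ y ∈ 𝒴, Summable fun x : {x : X // Yf x = y} =>
      (pLL p0 ν l x.1 / pLLY Yf p0 ν l y) * wdot γ ν x.1)
    (hpsum : ∀ l γ : Fin n → ℝ, Summable fun x : X => pLL p0 ν l x *
      ∑ i, ((ν i x : ℝ) / (nuSharp ν x : ℝ)) * Real.exp (γ i * (nuSharp ν x : ℝ)))
    (seq γh : ℕ → Fin n → ℝ)
    (hseqZ : ∀ k : ℕ, Summable fun x : X => Real.exp (wdot (seq k) ν x) * p0 x)
    (hstep : ∀ k : ℕ, seq (k + 1) = γh k + seq k)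
    (hmax : ∀ k : ℕ, ∀ γ : Fin n → ℝ,
      Aaux Yf p0 ν 𝒴 γ (seq k) ≤ Aaux Yf p0 ν 𝒴 (γh k) (seq k))
    (hbdd : ∃ B : ℝ, ∀ k : ℕ, LL Yf p0 ν 𝒴 (seq k) ≤ B)
    (lstar : Fin n → ℝ)
    (hZstar : Summable fun x : X => Real.exp (wdot lstar ν x) * p0 x)
    (φ : ℕ → ℕ) (hφ : StrictMono φ)
    (hlim : Filter.Tendsto (fun k : ℕ => seq (φ k)) Filter.atTop (nhds lstar))
    (hAcont : ContinuousOn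
      (fun p : (Fin n → ℝ) × (Fin n → ℝ) => Aaux Yf p0 ν 𝒴 p.1 p.2)
      (Set.univ ×ˢ {l : Fin n → ℝ | Summable fun x : X => Real.exp (wdot l ν x) * p0 x}))
    (hLcont : ContinuousOn (LL Yf p0 ν 𝒴)
      {l : Fin n → ℝ | Summable fun x : X => Real.exp (wdot l ν x) * p0 x})
    (hderiv : ∀ l : Fin n → ℝ, (Summable fun x : X => Real.exp (wdot l ν x) * p0 x) →
      ∀ γ : Fin n → ℝ, ∃ D : ℝ,
        HasDerivAt (fun t : ℝ => Aaux Yf p0 ν 𝒴 (t • γ) l) D 0 ∧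
        HasDerivAt (fun t : ℝ => LL Yf p0 ν 𝒴 (l + t • γ)) D 0) :
    Monotone (fun k : ℕ => LL Yf p0 ν 𝒴 (seq k)) ∧
    Filter.Tendsto (fun k : ℕ => LL Yf p0 ν 𝒴 (seq k)) Filter.atTop
      (nhds (LL Yf p0 ν 𝒴 lstar)) ∧
    (∀ γ : Fin n → ℝ, HasDerivAt (fun t : ℝ => LL Yf p0 ν 𝒴 (lstar + t • γ)) 0 0) :=
  im_likelihood_converges_to_critical_value_general Yf p0 hp0 ν hν 𝒴 hpos hksum hpsum seq γh hseqZ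
    hstep hmax lstar hZstar φ hφ hlim hAcont hLcont hderiv
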